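/- Let H be an n×p complex matrix and let G be a p×n complex matrix satisfying the generalized-inverse identity H·G·H = H. For every measurement vector m ∈ ℂⁿ and every state-corruption vector c ∈ ℂᵖ, the residual of the attacked measurement equals the residual of the clean measurement: (m + H·c) − H·(G·(m + H·c)) = m − H·(G·m). In particular, an unobservable false data injection attack of the form m̄ = m + H·c leaves the residual of the least-squares state estimator unchanged and hence cannot be detected by a residue-based bad data detector. -/
import Mathlib


/-- An unobservable FDI attack `m + H.mulVec c` leaves the residual of the
least-squares state estimator (with generalized inverse `G`, `H * G * H = H`)
unchanged, hence it cannot be detected by a residue-based bad data detector. -/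
theorem residual_invariant_under_unobservable_attack
    {n p : ℕ} (H : Matrix (Fin n) (Fin p) ℂ) (G : Matrix (Fin p) (Fin n) ℂ)
    (hGen : H * G * H = H) (m : Fin n → ℂ) (c : Fin p → ℂ) :
    (m + H.mulVec c) - H.mulVec (G.mulVec (m + H.mulVec c))
      = m - H.mulVec (G.mulVec m) := by
  have : (H * G * H).mulVec c = H.mulVec c := by rw [hGen]
  simp only [Matrix.mulVec_add, ← Matrix.mulVec_mulVec] at *
  rw [this]
  abel
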